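/- Let (G, w) be a weighted tournament and p a vertex not in any triangle of G. If S⁻ is a 2-approximate solution of (G[N⁻(p)], w) and S⁺ is a 2-approximate solution of (G[N⁺(p)], w), then S⁻ ∪ S⁺ is a 2-approximate p-disjoint solution of (G, w). -/

import Mathlib

open Finset

variable {V : Type*}

/-- A digraph (given by its arc relation) is acyclic if no vertex lies on a directed cycle. -/
def Acyclic (E : V → V → Prop) : Prop := ∀ v, ¬ Relation.TransGen E v v

/-- The digraph obtained by deleting the vertex set `X`. -/
def Delete [DecidableEq V] (E : V → V → Prop) (X : Finset V) : V → V → Prop :=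
  fun a b => a ∉ X ∧ b ∉ X ∧ E a b

/-- The subgraph induced on the vertex set `A`. -/
def Induce [DecidableEq V] (E : V → V → Prop) (A : Finset V) : V → V → Prop :=
  fun a b => a ∈ A ∧ b ∈ A ∧ E a b

/-- `S` is a feedback vertex set of the digraph `E`. -/
def IsFVS [DecidableEq V] (E : V → V → Prop) (S : Finset V) : Prop :=
  Acyclic (Delete E S)

/-- A tournament: no self-loops and exactly one arc between any two distinct vertices. -/
def IsTournament (E : V → V → Prop) : Prop :=
  (∀ v, ¬ E v v) ∧ ∀ u v, u ≠ v → (E u v ↔ ¬ E v u)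

/-- Weight of a vertex set. -/
def weight (w : V → ℕ) (S : Finset V) : ℕ := ∑ v ∈ S, w v

/-- Out-neighborhood. -/
def Nout [Fintype V] [DecidableEq V] (E : V → V → Prop) [DecidableRel E] (p : V) : Finset V :=
  Finset.univ.filter (fun u => E p u)

/-- In-neighborhood. -/
def Nin [Fintype V] [DecidableEq V] (E : V → V → Prop) [DecidableRel E] (p : V) : Finset V :=
  Finset.univ.filter (fun u => E u p)

/-- `S` is a minimum-weight FVS of `(E, w)`. -/
def IsOptFVS [DecidableEq V] (E : V → V → Prop) (w : V → ℕ) (S : Finset V) : Prop :=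
  IsFVS E S ∧ ∀ S', IsFVS E S' → weight w S ≤ weight w S'

/-- `S` is a `p`-disjoint FVS of `E`. -/
def IsPDisjFVS [DecidableEq V] (E : V → V → Prop) (p : V) (S : Finset V) : Prop :=
  IsFVS E S ∧ p ∉ S

/-- `S` is a minimum-weight `p`-disjoint FVS of `(E, w)`. -/
def IsOptPDisjFVS [DecidableEq V] (E : V → V → Prop) (w : V → ℕ) (p : V) (S : Finset V) : Prop :=
  IsPDisjFVS E p S ∧ ∀ S', IsPDisjFVS E p S' → weight w S ≤ weight w S'

/-- `S` is a 2-approximate solution of `(E, w)`. -/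
def TwoApproxFVS [DecidableEq V] (E : V → V → Prop) (w : V → ℕ) (S : Finset V) : Prop :=
  IsFVS E S ∧ ∀ S', IsOptFVS E w S' → weight w S ≤ 2 * weight w S'

/-- `S` is a 2-approximate `p`-disjoint solution of `(E, w)`. -/
def TwoApproxPDisj [DecidableEq V] (E : V → V → Prop) (w : V → ℕ) (p : V) (S : Finset V) : Prop :=
  IsPDisjFVS E p S ∧ ∀ S', IsOptPDisjFVS E w p S' → weight w S ≤ 2 * weight w S'

/-- `l` is a topological sort of the subgraph of `E` induced on the vertex set `A`. -/
def IsTopoOn [DecidableEq V] (E : V → V → Prop) (A : Finset V) (l : List V) : Prop :=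
  l.Nodup ∧ (∀ v, v ∈ l ↔ v ∈ A) ∧
    ∀ (i j : ℕ) (hi : i < l.length) (hj : j < l.length),
      E (l.get ⟨i, hi⟩) (l.get ⟨j, hj⟩) → i < j

/-! Give `N⁻(p)`, `p`, `N⁺(p)` the levels `0, 1, 2`. No arc goes down a level: an arc from
`N⁺(p)` into `N⁻(p)` would close a triangle through `p`. Hence every cycle stays inside one level,
that is inside `N⁻(p)` or inside `N⁺(p)`, where `S⁻ ∪ S⁺` meets it. Conversely, a `p`-disjoint
FVS `S` meets the disjoint sets `N⁻(p)` and `N⁺(p)` in FVSs of the two induced subtournaments, so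
`w(S⁻ ∪ S⁺) ≤ 2 opt⁻ + 2 opt⁺ ≤ 2 w(S)`. -/

lemma Acyclic.mono {R E : V → V → Prop} (hRE : R ≤ E) (h : Acyclic E) : Acyclic R :=
  fun v hv => h v (Relation.TransGen.mono hRE v v hv)

lemma acyclic_of_forall_not {R : V → V → Prop} (hR : ∀ a b, ¬ R a b) : Acyclic R := by
  intro v hv
  obtain ⟨b, hvb, -⟩ := Relation.TransGen.head'_iff.mp hv
  exact hR v b hvb

lemma Relation.TransGen.le_of_monotone {α : Type*} [Preorder α] {E : V → V → Prop} {f : V → α}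
    (hf : ∀ a b, E a b → f a ≤ f b) {a b : V} (h : Relation.TransGen E a b) : f a ≤ f b := by
  simpa only [Relation.transGen_eq_self] using h.lift f hf

lemma acyclic_of_acyclic_levels {α : Type*} [PartialOrder α] {E : V → V → Prop} (f : V → α)
    (hf : ∀ a b, E a b → f a ≤ f b)
    (hlevel : ∀ c, Acyclic fun x y => E x y ∧ f x = c ∧ f y = c) :
    Acyclic E := by
  suffices key : ∀ {a b}, Relation.TransGen E a b → f b ≤ f a →
      Relation.TransGen (fun x y => E x y ∧ f x = f a ∧ f y = f a) a b from
    fun v hv => hlevel (f v) v (key hv le_rfl)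
  intro a b h hba
  induction h with
  | single hab => exact .single ⟨hab, rfl, le_antisymm hba (hf _ _ hab)⟩
  | @tail c b hac hcb ih =>
    have hc : f c = f a := le_antisymm ((hf _ _ hcb).trans hba) (hac.le_of_monotone hf)
    have hb : f b = f a := le_antisymm hba (hc ▸ hf _ _ hcb)
    exact .tail (ih hc.le) ⟨hcb, hc, hb⟩

lemma IsFVS.inter_induce [DecidableEq V] {E : V → V → Prop} {S : Finset V} (h : IsFVS E S)
    (A : Finset V) : IsFVS (Induce E A) (S ∩ A) :=
  h.mono fun _ _ ⟨hx, hy, hxA, hyA, hxy⟩ =>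
    ⟨fun hxS => hx (mem_inter.mpr ⟨hxS, hxA⟩), fun hyS => hy (mem_inter.mpr ⟨hyS, hyA⟩), hxy⟩

lemma weight_mono (w : V → ℕ) {S T : Finset V} (h : S ⊆ T) : weight w S ≤ weight w T :=
  sum_le_sum_of_subset h

lemma weight_union_le [DecidableEq V] (w : V → ℕ) (S T : Finset V) :
    weight w (S ∪ T) ≤ weight w S + weight w T :=
  (Nat.le_add_right _ _).trans_eq sum_union_inter

lemma weight_union [DecidableEq V] (w : V → ℕ) {S T : Finset V} (h : Disjoint S T) :
    weight w (S ∪ T) = weight w S + weight w T :=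
  sum_union h

lemma exists_isOptFVS [Finite V] [DecidableEq V] (E : V → V → Prop) (w : V → ℕ) :
    ∃ S, IsOptFVS E w S := by
  classical
  have : Fintype V := Fintype.ofFinite V
  have huniv : IsFVS E univ := acyclic_of_forall_not fun a _ h => h.1 (mem_univ a)
  obtain ⟨S, hS, hmin⟩ := exists_min_image {S : Finset V | IsFVS E S} (weight w) ⟨univ, by simpa⟩
  exact ⟨S, (mem_filter.mp hS).2, fun T hT => hmin T (by simpa)⟩

lemma TwoApproxFVS.weight_le [Finite V] [DecidableEq V] {E : V → V → Prop} {w : V → ℕ}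
    {S T : Finset V} (hS : TwoApproxFVS E w S) (hT : IsFVS E T) :
    weight w S ≤ 2 * weight w T := by
  obtain ⟨O, hO⟩ := exists_isOptFVS E w
  exact (hS.2 O hO).trans (Nat.mul_le_mul_left 2 (hO.2 T hT))

section Tournament

variable {E : V → V → Prop}

lemma IsTournament.eq_of_not_adj (hT : IsTournament E) {u v : V} (h₁ : ¬ E u v) (h₂ : ¬ E v u) :
    u = v := by
  by_contra huv
  exact h₁ ((hT.2 u v huv).mpr h₂)

lemma IsTournament.not_adj_of_adj (hT : IsTournament E) {u v : V} (h : E u v) : ¬ E v u := by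
  obtain rfl | huv := eq_or_ne u v
  · exact absurd h (hT.1 u)
  · exact (hT.2 u v huv).mp h

variable [DecidableRel E] {p : V}

@[simp] lemma mem_Nin [Fintype V] [DecidableEq V] {v : V} : v ∈ Nin E p ↔ E v p := by
  simp [Nin]

@[simp] lemma mem_Nout [Fintype V] [DecidableEq V] {v : V} : v ∈ Nout E p ↔ E p v := by
  simp [Nout]

lemma IsTournament.disjoint_Nin_Nout [Fintype V] [DecidableEq V] (hT : IsTournament E) :
    Disjoint (Nin E p) (Nout E p) :=
  disjoint_left.mpr fun _ hin hout => hT.not_adj_of_adj (mem_Nout.mp hout) (mem_Nin.mp hin)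

lemma IsTournament.notMem_Nin_union_Nout [Fintype V] [DecidableEq V] (hT : IsTournament E) :
    p ∉ Nin E p ∪ Nout E p := by
  simp [hT.1 p]

def pivotLevel (E : V → V → Prop) [DecidableRel E] (p v : V) : ℕ :=
  if E v p then 0 else if E p v then 2 else 1

lemma pivotLevel_eq_zero {v : V} : pivotLevel E p v = 0 ↔ E v p := by
  unfold pivotLevel; split_ifs <;> simp_all

lemma IsTournament.eq_of_pivotLevel_eq_one (hT : IsTournament E) {v : V}
    (h : pivotLevel E p v = 1) : v = p := by
  unfold pivotLevel at h
  split_ifs at h with hvp hpv <;> first | omega | exact hT.eq_of_not_adj hvp hpv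

lemma adj_of_two_le_pivotLevel {v : V} (h : 2 ≤ pivotLevel E p v) : E p v := by
  unfold pivotLevel at h; split_ifs at h <;> first | assumption | omega

lemma pivotLevel_mono (hT : IsTournament E) (hp : ¬ ∃ a b, E p a ∧ E a b ∧ E b p) {a b : V}
    (hab : E a b) : pivotLevel E p a ≤ pivotLevel E p b := by
  by_cases hap : E a p
  · simp [pivotLevel, hap]
  obtain rfl | hpa := (eq_or_ne a p).imp id fun hne => (hT.2 p a hne.symm).mpr hap
  · simp [pivotLevel, hT.1 a, hab, hT.not_adj_of_adj hab]
  · have hbp : ¬ E b p := fun hbp => hp ⟨a, b, hpa, hab, hbp⟩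
    have hpb : E p b := (hT.2 p b fun hpb => hap (hpb ▸ hab)).mpr hbp
    simp [pivotLevel, hap, hpa, hbp, hpb]

lemma IsTournament.isFVS_union_of_triangleFree [Fintype V] [DecidableEq V]
    (hT : IsTournament E) (hp : ¬ ∃ a b, E p a ∧ E a b ∧ E b p) {Sm Sp : Finset V}
    (hSm : IsFVS (Induce E (Nin E p)) Sm) (hSp : IsFVS (Induce E (Nout E p)) Sp) :
    IsFVS E (Sm ∪ Sp) := by
  refine acyclic_of_acyclic_levels (pivotLevel E p) (fun a b h => pivotLevel_mono hT hp h.2.2) ?_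
  rintro (_ | _ | c)
  · refine hSm.mono fun x y ⟨⟨hx, hy, hxy⟩, hx0, hy0⟩ => ?_
    simp_all [Delete, Induce, pivotLevel_eq_zero]
  · refine acyclic_of_forall_not fun x y ⟨⟨_, _, hxy⟩, hx1, hy1⟩ => ?_
    rw [hT.eq_of_pivotLevel_eq_one hx1, hT.eq_of_pivotLevel_eq_one hy1] at hxy
    exact hT.1 p hxy
  · refine hSp.mono fun x y ⟨⟨hx, hy, hxy⟩, hx2, hy2⟩ => ?_
    have hpx : E p x := adj_of_two_le_pivotLevel (by omega)
    have hpy : E p y := adj_of_two_le_pivotLevel (by omega)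
    simp_all [Delete, Induce]

end Tournament

/-- If `p` lies in no directed triangle and `S⁻`, `S⁺` are 2-approximate solutions
of `(G[N⁻(p)], w)` and `(G[N⁺(p)], w)`, then `S⁻ ∪ S⁺` is a 2-approximate `p`-disjoint solution
of `(G, w)`. -/
theorem stmt13 [Fintype V] [DecidableEq V] (E : V → V → Prop) [DecidableRel E]
    (hT : IsTournament E) (w : V → ℕ) (p : V)
    (hp : ¬ ∃ a b, E p a ∧ E a b ∧ E b p)
    (Sm Sp : Finset V) (hSm : Sm ⊆ Nin E p) (hSp : Sp ⊆ Nout E p)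
    (h2m : TwoApproxFVS (Induce E (Nin E p)) w Sm)
    (h2p : TwoApproxFVS (Induce E (Nout E p)) w Sp) :
    TwoApproxPDisj E w p (Sm ∪ Sp) := by
  refine ⟨⟨hT.isFVS_union_of_triangleFree hp h2m.1 h2p.1,
    fun hpS => hT.notMem_Nin_union_Nout (union_subset_union hSm hSp hpS)⟩, ?_⟩
  rintro S ⟨⟨hS, -⟩, -⟩
  calc weight w (Sm ∪ Sp)
      ≤ weight w Sm + weight w Sp := weight_union_le w Sm Sp
    _ ≤ 2 * weight w (S ∩ Nin E p) + 2 * weight w (S ∩ Nout E p) :=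
        add_le_add (h2m.weight_le (hS.inter_induce _)) (h2p.weight_le (hS.inter_induce _))
    _ = 2 * weight w (S ∩ Nin E p ∪ S ∩ Nout E p) := by
        rw [weight_union w (hT.disjoint_Nin_Nout.mono inter_subset_right inter_subset_right),
          mul_add]
    _ ≤ 2 * weight w S :=
        Nat.mul_le_mul_left 2 (weight_mono w (union_subset inter_subset_left inter_subset_left))
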